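/- Let G = Z₂ × Z₄, θ a normalized orthomorphism of G, x the unique element of A₂₂, and a ∈ A₄₄ \ θ(A₄₄). Then θ(a) = ax. Moreover A₄₄ = {a, ax}, θ(A₄₄) = {ax, ax·θ(x)}, and A₄₂ = {ax·θ(x), a·θ(x)}. -/

import Mathlib

/-- The group `ℤ₂ × ℤ₄` (written additively). -/
abbrev G24 : Type := ZMod 2 × ZMod 4

/-- A normalized orthomorphism: a bijection fixing the identity whose associated
complete mapping `x ↦ -x + θ x` (i.e. `x⁻¹θ(x)` in additive notation) is a bijection. -/
def IsNormOrtho (θ : G24 → G24) : Prop :=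
  Function.Bijective θ ∧ θ 0 = 0 ∧ Function.Bijective (fun x => -x + θ x)

/-- Orthogonality of orthomorphisms: `x ↦ θ₁(x)⁻¹θ₂(x)` is a bijection. -/
def Orthogonal (θ₁ θ₂ : G24 → G24) : Prop :=
  Function.Bijective (fun x => -θ₁ x + θ₂ x)

/-- `A i j θ = {x : order of x is i and order of θ(x) is j}`. -/
def A (i j : ℕ) (θ : G24 → G24) : Set G24 :=
  {x | addOrderOf x = i ∧ addOrderOf (θ x) = j}

/-!
Write `η g = -g + θ g`. The elements of order 4 form a coset of the Klein group `Ω` of elements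
killed by 2 and all have the same double, so `η` maps `A₄₄` into `Ω \ {0, η x} = {x, θ x}`.
Conversely the `η`-preimages `b` of `x` and `b'` of `θ x` lie in `A₄₄`, so `A₄₄ = {b, b'}` with
`θ b = b + x` and `θ b' = b' + θ x`. Among the candidates `b + ω` for `b'`, injectivity of `θ`
rules out `b + x + θ x`, and `b + θ x` would force `θ (θ x + x) = θ (θ x) + x`, that is
`η (θ x + x) = η (θ x)`. Hence `b' = b + x`, `b` is the element of `A₄₄` outside
`θ(A₄₄) = {b + x, b + x + θ x}`, and the rest of the coset is `A₄₂`.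
-/
namespace G24

theorem four_nsmul_eq_zero (g : G24) : 4 • g = 0 := by
  revert g; decide

theorem neg_add_add_neg_add_eq_zero (u v : G24) (hu : u + u ≠ 0) (hv : v + v ≠ 0) :
    (-u + v) + (-u + v) = 0 := by
  revert u v; decide

set_option synthInstance.maxSize 2000 in
theorem eq_zero_or_eq_or_eq_or_eq_add (w x t : G24) (hw : w + w = 0) (hx : x + x = 0)
    (ht : t + t = 0) (hx0 : x ≠ 0) (ht0 : t ≠ 0) (hxt : x ≠ t) :
    w = 0 ∨ w = x ∨ w = t ∨ w = x + t := by
  revert w x t; decide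

theorem eq_or_eq_add_or_eq_add_or_eq_add_add {u b x t : G24} (hu : u + u ≠ 0) (hb : b + b ≠ 0)
    (hx : x + x = 0) (ht : t + t = 0) (hx0 : x ≠ 0) (ht0 : t ≠ 0) (hxt : x ≠ t) :
    u = b ∨ u = b + x ∨ u = b + t ∨ u = b + x + t := by
  have hdecomp : u = b + (-b + u) := by abel
  rcases eq_zero_or_eq_or_eq_or_eq_add _ x t (neg_add_add_neg_add_eq_zero b u hb hu) hx ht hx0
    ht0 hxt with h | h | h | h <;>
    rw [hdecomp, h] <;> simp only [add_zero, add_assoc, true_or, or_true]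

theorem addOrderOf_eq_two_iff {g : G24} : addOrderOf g = 2 ↔ g ≠ 0 ∧ g + g = 0 := by
  rw [addOrderOf_eq_prime_iff, two_nsmul, and_comm]

theorem addOrderOf_eq_four_iff {g : G24} : addOrderOf g = 4 ↔ g + g ≠ 0 := by
  rw [← two_nsmul]
  refine ⟨fun h hg => ?_, fun hg => addOrderOf_eq_prime_pow (p := 2) (n := 1) hg
    (four_nsmul_eq_zero g)⟩
  have := Nat.le_of_dvd two_pos (addOrderOf_dvd_of_nsmul_eq_zero hg)
  omega

end G24

section Membership

variable {θ : G24 → G24} {g : G24}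

theorem mem_A_two_two_iff :
    g ∈ A 2 2 θ ↔ (g ≠ 0 ∧ g + g = 0) ∧ θ g ≠ 0 ∧ θ g + θ g = 0 := by
  simp only [A, Set.mem_ofPred_eq, G24.addOrderOf_eq_two_iff]

theorem mem_A_four_four_iff : g ∈ A 4 4 θ ↔ g + g ≠ 0 ∧ θ g + θ g ≠ 0 := by
  simp only [A, Set.mem_ofPred_eq, G24.addOrderOf_eq_four_iff]

theorem mem_A_four_two_iff : g ∈ A 4 2 θ ↔ g + g ≠ 0 ∧ θ g ≠ 0 ∧ θ g + θ g = 0 := by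
  simp only [A, Set.mem_ofPred_eq, G24.addOrderOf_eq_four_iff, G24.addOrderOf_eq_two_iff]

end Membership

namespace IsNormOrtho

variable {θ : G24 → G24} {x : G24}

theorem injective (hθ : IsNormOrtho θ) : Function.Injective θ := hθ.1.1

theorem map_zero (hθ : IsNormOrtho θ) : θ 0 = 0 := hθ.2.1

theorem neg_add_injective (hθ : IsNormOrtho θ) : Function.Injective fun g => -g + θ g :=
  hθ.2.2.1

theorem neg_add_surjective (hθ : IsNormOrtho θ) : Function.Surjective fun g => -g + θ g :=
  hθ.2.2.2

theorem map_eq_zero_iff (hθ : IsNormOrtho θ) {g : G24} : θ g = 0 ↔ g = 0 :=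
  hθ.injective.eq_iff' hθ.map_zero

theorem map_add_ne_add (hθ : IsNormOrtho θ) (g : G24) {y : G24} (hy : y ≠ 0) :
    θ (g + y) ≠ θ g + y := by
  intro h
  have : g + y = g := hθ.neg_add_injective (show -(g + y) + θ (g + y) = -g + θ g by rw [h]; abel)
  exact hy (by simpa using this)

theorem map_ne_self (hθ : IsNormOrtho θ) {g : G24} (hg : g ≠ 0) : θ g ≠ g := by
  simpa [hθ.map_zero] using hθ.map_add_ne_add 0 hg

theorem mem_A_four_two_iff_not_mem (hθ : IsNormOrtho θ) {g : G24} (hg : g + g ≠ 0) :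
    g ∈ A 4 2 θ ↔ g ∉ A 4 4 θ := by
  have hg0 : g ≠ 0 := by rintro rfl; simp at hg
  simp [mem_A_four_two_iff, mem_A_four_four_iff, hg, hθ.map_eq_zero_iff, hg0]

theorem eq_of_add_self_eq_zero (hθ : IsNormOrtho θ) (hx : A 2 2 θ = {x}) {g : G24}
    (hg0 : g ≠ 0) (hg : g + g = 0) (hθg : θ g + θ g = 0) : g = x := by
  rw [← Set.mem_singleton_iff, ← hx, mem_A_two_two_iff]
  exact ⟨⟨hg0, hg⟩, hθ.map_eq_zero_iff.not.mpr hg0, hθg⟩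

theorem neg_add_apply_eq_or_eq (hθ : IsNormOrtho θ) (hx : A 2 2 θ = {x}) {g : G24}
    (hg : g ∈ A 4 4 θ) : -g + θ g = x ∨ -g + θ g = θ x := by
  obtain ⟨⟨hx0, hxx⟩, hθx0, hθxx⟩ := mem_A_two_two_iff.mp (hx ▸ Set.mem_singleton x)
  rw [mem_A_four_four_iff] at hg
  have hg0 : g ≠ 0 := by rintro rfl; simp at hg
  have hgx : g ≠ x := by rintro rfl; exact hg.1 hxx
  rcases G24.eq_zero_or_eq_or_eq_or_eq_add _ x (θ x)
    (G24.neg_add_add_neg_add_eq_zero g (θ g) hg.1 hg.2) hxx hθxx hx0 hθx0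
    (hθ.map_ne_self hx0).symm with h | h | h | h
  · refine absurd (hθ.neg_add_injective (h.trans ?_ : -g + θ g = -0 + θ 0)) hg0
    simp [hθ.map_zero]
  · exact .inl h
  · exact .inr h
  · refine absurd (hθ.neg_add_injective (h.trans ?_ : -g + θ g = -x + θ x)) hgx
    rw [neg_eq_of_add_eq_zero_left hxx]

theorem mem_A_four_four_of_neg_add_apply_eq (hθ : IsNormOrtho θ) (hx : A 2 2 θ = {x})
    {w b : G24} (hw0 : w ≠ 0) (hw : w + w = 0) (hwx : w ≠ -x + θ x) (hb : -b + θ b = w) :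
    b ∈ A 4 4 θ := by
  rw [neg_add_eq_iff_eq_add] at hb
  have hb0 : b ≠ 0 := by rintro rfl; simp [hθ.map_zero] at hb; exact hw0 hb.symm
  have hdouble : θ b + θ b = b + b := by rw [hb]; grind
  have hbb : b + b ≠ 0 := by
    intro hbb
    have hbx := hθ.eq_of_add_self_eq_zero hx hb0 hbb (hdouble.trans hbb)
    subst hbx
    exact hwx (by rw [hb]; abel)
  exact mem_A_four_four_iff.mpr ⟨hbb, hdouble ▸ hbb⟩

theorem exists_A_four_four_eq_pair (hθ : IsNormOrtho θ) (hx : A 2 2 θ = {x}) :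
    ∃ b b', θ b = b + x ∧ θ b' = b' + θ x ∧ A 4 4 θ = {b, b'} := by
  obtain ⟨⟨hx0, hxx⟩, hθx0, hθxx⟩ := mem_A_two_two_iff.mp (hx ▸ Set.mem_singleton x)
  have hxθx := (hθ.map_ne_self hx0).symm
  obtain ⟨b, hb⟩ := hθ.neg_add_surjective x
  obtain ⟨b', hb'⟩ := hθ.neg_add_surjective (θ x)
  have hb44 := hθ.mem_A_four_four_of_neg_add_apply_eq hx hx0 hxx (by grind) hb
  have hb'44 := hθ.mem_A_four_four_of_neg_add_apply_eq hx hθx0 hθxx (by grind) hb'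
  refine ⟨b, b', neg_add_eq_iff_eq_add.mp hb, neg_add_eq_iff_eq_add.mp hb', ?_⟩
  refine Set.Subset.antisymm (fun g hg => ?_) (Set.insert_subset hb44 (by simpa using hb'44))
  rcases hθ.neg_add_apply_eq_or_eq hx hg with h | h
  · exact .inl (hθ.neg_add_injective (h.trans hb.symm))
  · exact .inr (hθ.neg_add_injective (h.trans hb'.symm))

/-- Otherwise `θ x` and `θ x + x` would both be sent into `{b + θ x, b + x + θ x}`, forcing
`θ (θ x + x) = θ (θ x) + x`. -/
theorem map_add_apply_ne (hθ : IsNormOrtho θ) (hx : A 2 2 θ = {x}) {b : G24} (hb : b + b ≠ 0)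
    (hθb : θ b = b + x) : θ (b + θ x) ≠ b := by
  obtain ⟨⟨hx0, hxx⟩, hθx0, hθxx⟩ := mem_A_two_two_iff.mp (hx ▸ Set.mem_singleton x)
  have hxθx := (hθ.map_ne_self hx0).symm
  intro h
  have hcoset : ∀ c, c ≠ 0 → c + c = 0 → c ≠ x → θ c = b + θ x ∨ θ c = b + x + θ x := by
    intro c hc0 hc hcx
    have hθc : θ c + θ c ≠ 0 := fun hθc => hcx (hθ.eq_of_add_self_eq_zero hx hc0 hc hθc)
    rcases G24.eq_or_eq_add_or_eq_add_or_eq_add_add hθc hb hxx hθxx hx0 hθx0 hxθx with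
      h' | h' | h' | h'
    · have : c = b + θ x := hθ.injective (h'.trans h.symm)
      exact absurd (this ▸ hc) (by grind)
    · have : c = b := hθ.injective (h'.trans hθb.symm)
      exact absurd (this ▸ hc) hb
    · exact .inl h'
    · exact .inr h'
  have hne : θ (θ x + x) ≠ θ (θ x) := fun e => hx0 (by simpa using hθ.injective e)
  have hshift := hθ.map_add_ne_add (θ x) hx0
  rcases hcoset (θ x) hθx0 hθxx hxθx.symm with h₁ | h₁ <;>
    rcases hcoset (θ x + x) (by grind) (by grind) (by grind) with h₂ | h₂
  · exact hne (h₂.trans h₁.symm)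
  · exact hshift (by rw [h₁, h₂]; abel)
  · exact hshift (by rw [h₁, h₂]; grind)
  · exact hne (h₂.trans h₁.symm)

theorem exists_A_four_four_eq (hθ : IsNormOrtho θ) (hx : A 2 2 θ = {x}) :
    ∃ b, θ b = b + x ∧ θ (b + x) = b + x + θ x ∧ A 4 4 θ = {b, b + x} := by
  obtain ⟨⟨hx0, hxx⟩, hθx0, hθxx⟩ := mem_A_two_two_iff.mp (hx ▸ Set.mem_singleton x)
  have hxθx := (hθ.map_ne_self hx0).symm
  obtain ⟨b, b', hθb, hθb', hA⟩ := hθ.exists_A_four_four_eq_pair hx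
  have hb := (mem_A_four_four_iff.mp (by rw [hA]; simp : b ∈ A 4 4 θ)).1
  have hb' := (mem_A_four_four_iff.mp (by rw [hA]; simp : b' ∈ A 4 4 θ)).1
  refine ⟨b, hθb, ?_⟩
  rcases G24.eq_or_eq_add_or_eq_add_or_eq_add_add hb' hb hxx hθxx hx0 hθx0 hxθx with
    rfl | rfl | rfl | rfl
  · exact absurd (add_left_cancel (hθb.symm.trans hθb')) hxθx
  · exact ⟨hθb', hA⟩
  · exact absurd (by rw [hθb']; grind) (hθ.map_add_apply_ne hx hb hθb)
  · have : b + x + θ x = b := hθ.injective (by rw [hθb, hθb']; grind)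
    exact absurd this (by grind)

theorem A_four_two_eq (hθ : IsNormOrtho θ) (hx : A 2 2 θ = {x}) {b : G24}
    (hA : A 4 4 θ = {b, b + x}) : A 4 2 θ = {b + x + θ x, b + θ x} := by
  obtain ⟨⟨hx0, hxx⟩, hθx0, hθxx⟩ := mem_A_two_two_iff.mp (hx ▸ Set.mem_singleton x)
  have hxθx := (hθ.map_ne_self hx0).symm
  have hb := (mem_A_four_four_iff.mp (by rw [hA]; simp : b ∈ A 4 4 θ)).1
  ext g
  constructor
  · intro hg
    have hg4 := (mem_A_four_two_iff.mp hg).1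
    rw [hθ.mem_A_four_two_iff_not_mem hg4, hA] at hg
    rcases G24.eq_or_eq_add_or_eq_add_or_eq_add_add hg4 hb hxx hθxx hx0 hθx0 hxθx with
      rfl | rfl | rfl | rfl
    · simp at hg
    · simp at hg
    · exact .inr rfl
    · exact .inl rfl
  · rintro (rfl | rfl) <;> rw [hθ.mem_A_four_two_iff_not_mem (by grind), hA] <;> grind

end IsNormOrtho

theorem structure_A44 (θ : G24 → G24) (hθ : IsNormOrtho θ) (x a : G24)
    (hx : A 2 2 θ = {x}) (ha : a ∈ A 4 4 θ \ θ '' A 4 4 θ) :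
    θ a = a + x ∧ A 4 4 θ = {a, a + x} ∧
      θ '' A 4 4 θ = {a + x, a + x + θ x} ∧
      A 4 2 θ = {a + x + θ x, a + θ x} := by
  obtain ⟨b, hθb, hθbx, hA⟩ := hθ.exists_A_four_four_eq hx
  have himage : θ '' A 4 4 θ = {b + x, b + x + θ x} := by rw [hA, Set.image_pair, hθb, hθbx]
  obtain ⟨haA, haimage⟩ := ha
  rw [hA] at haA
  rw [himage] at haimage
  obtain rfl : a = b := haA.resolve_right fun h => haimage (.inl h)
  exact ⟨hθb, hA, himage, hθ.A_four_two_eq hx hA⟩
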